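/- arXiv:1409.0393 — 3 statements merged into one kernel-verified Lean document; each statement's English description precedes it below -/
import Mathlib

section
/- For a deterministic abstract machine, low-lockstep noninterference (LLNI) implies end-to-end noninterference (EENI), provided that the indistinguishability relation is symmetric, every successful ending state is a low state, every successful ending state is stuck, and indistinguishability preserves membership in the set of ending states. -/
/-- An abstract machine: states, a deterministic partial step function, and a
family of indistinguishability relations indexed by observation levels. -/
structure Machine (S O : Type) where
  step : S → Option S
  indist : O → S → S → Prop

namespace Machine

variable {S O : Type} (M : Machine S O)

/-- Single step relation. -/
def StepRel (s s' : S) : Prop := M.step s = some s'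

/-- Reflexive-transitive closure of the step relation. -/
def Exec : S → S → Prop := Relation.ReflTransGen M.StepRel

/-- A stuck state. -/
def Stuck (s : S) : Prop := M.step s = none

/-- `S ⇓ S'` : `S` executes to the stuck state `S'`. -/
def Halts (s s' : S) : Prop := M.Exec s s' ∧ M.Stuck s'

/-- A (possibly partial) trace of the machine starting from a state. -/
inductive IsTrace : S → List S → Prop where
  | single (s : S) : IsTrace s [s]
  | cons {s s' : S} {t : List S} : M.step s = some s' → IsTrace s' t →
      IsTrace s (s :: t)

/-- End-to-end noninterference. -/
def EENI (Start End_ : S → Prop) : Prop :=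
  ∀ o s1 s2 s1' s2', Start s1 → Start s2 → M.indist o s1 s2 →
    M.Halts s1 s1' → M.Halts s2 s2' → End_ s1' → End_ s2' →
    M.indist o s1' s2'

/-- Trace indistinguishability for LLNI. -/
inductive TIndist (Low : S → Prop) (R : S → S → Prop) : List S → List S → Prop where
  | lockstep {s1 s2 : S} {t1 t2 : List S} : Low s1 → Low s2 → R s1 s2 →
      TIndist Low R t1 t2 → TIndist Low R (s1 :: t1) (s2 :: t2)
  | highFilter {s1 : S} {t1 t2 : List S} : ¬ Low s1 → TIndist Low R t1 t2 →
      TIndist Low R (s1 :: t1) t2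
  | nilR (t : List S) : TIndist Low R t []
  | symm {t1 t2 : List S} : TIndist Low R t1 t2 → TIndist Low R t2 t1

/-- Low-lockstep noninterference. -/
def LLNI (Start : S → Prop) (Low : O → S → Prop) : Prop :=
  ∀ o s1 s2 t1 t2, Start s1 → Start s2 → M.indist o s1 s2 →
    M.IsTrace s1 t1 → M.IsTrace s2 t2 →
    TIndist (Low o) (M.indist o) t1 t2

end Machine

/-!
Run each execution as a trace; LLNI relates the two traces. Ending states are stuck, so
they can only be the last state of a trace, and they are low, so the high filter never
drops them. Walking down the derivation of trace indistinguishability, the two ending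
states must therefore meet in one lockstep pair.
-/

namespace List.IsChain

variable {α : Type*} {r : α → α → Prop}

theorem eq_nil_of_terminal {a : α} {l : List α} (h : (a :: l).IsChain r)
    (ha : ∀ b, ¬ r a b) : l = [] := by
  cases l with
  | nil => rfl
  | cons b l => exact absurd (List.isChain_cons_cons.mp h).1 (ha b)

end List.IsChain

namespace Machine

variable {S O : Type}

namespace TIndist

variable {Low E : S → Prop} {R r : S → S → Prop}

theorem rel_of_mem_of_terminal (hsymm : ∀ s1 s2, R s1 s2 → R s2 s1) (hLow : ∀ s, E s → Low s)
    (hterm : ∀ s, E s → ∀ s', ¬ r s s') (hE : ∀ s1 s2, R s1 s2 → (E s1 ↔ E s2))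
    {t1 t2 : List S} (h : TIndist Low R t1 t2) (hc1 : t1.IsChain r) (hc2 : t2.IsChain r)
    {e1 e2 : S} (he1 : e1 ∈ t1) (he2 : e2 ∈ t2) (hE1 : E e1) (hE2 : E e2) : R e1 e2 := by
  induction h generalizing e1 e2 with
  | @lockstep s1 s2 t1 t2 _ _ hR _ ih =>
    rcases List.mem_cons.mp he1 with rfl | he1 <;> rcases List.mem_cons.mp he2 with rfl | he2
    · exact hR
    · have := hc2.eq_nil_of_terminal (hterm s2 ((hE _ _ hR).mp hE1))
      simp [this] at he2
    · have := hc1.eq_nil_of_terminal (hterm s1 ((hE _ _ hR).mpr hE2))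
      simp [this] at he1
    · exact ih hc1.tail hc2.tail he1 he2 hE1 hE2
  | highFilter hnLow _ ih =>
    rcases List.mem_cons.mp he1 with rfl | he1
    · exact absurd (hLow _ hE1) hnLow
    · exact ih hc1.tail hc2 he1 he2 hE1 hE2
  | nilR => simp at he2
  | symm _ ih => exact hsymm _ _ (ih hc2 hc1 he2 he1 hE2 hE1)

end TIndist

variable {M : Machine S O}

theorem Stuck.not_stepRel {s : S} (h : M.Stuck s) (s' : S) : ¬ M.StepRel s s' :=
  fun hs => Option.some_ne_none s' (hs.symm.trans h)

theorem IsTrace.isChain {s : S} {t : List S} (h : M.IsTrace s t) : t.IsChain M.StepRel := by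
  induction h with
  | single s => exact List.isChain_singleton s
  | cons hs ht ih =>
    cases ht <;> exact List.isChain_cons_cons.mpr ⟨hs, ih⟩

theorem Exec.exists_isTrace_mem {s s' : S} (h : M.Exec s s') : ∃ t, M.IsTrace s t ∧ s' ∈ t := by
  induction h using Relation.ReflTransGen.head_induction_on with
  | refl => exact ⟨[s'], .single s', List.mem_singleton_self s'⟩
  | head hs _ ih =>
    obtain ⟨t, ht, hmem⟩ := ih
    exact ⟨_ :: t, .cons hs ht, List.mem_cons_of_mem _ hmem⟩

end Machine

/-- LLNI implies EENI, provided indistinguishability is symmetric, ending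
states are low, ending states are stuck, and indistinguishability preserves
membership in the set of ending states. -/
theorem llni_implies_eeni {S O : Type} (M : Machine S O)
    (Start End_ : S → Prop) (Low : O → S → Prop)
    (hsymm : ∀ o s1 s2, M.indist o s1 s2 → M.indist o s2 s1)
    (hEndLow : ∀ o s, End_ s → Low o s)
    (hEndStuck : ∀ s, End_ s → M.Stuck s)
    (hEndIndist : ∀ o s1 s2, M.indist o s1 s2 → (End_ s1 ↔ End_ s2))
    (hllni : M.LLNI Start Low) :
    M.EENI Start End_ := by
  intro o s1 s2 s1' s2' hStart1 hStart2 hI ⟨hExec1, _⟩ ⟨hExec2, _⟩ hEnd1 hEnd2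
  obtain ⟨t1, ht1, hmem1⟩ := hExec1.exists_isTrace_mem
  obtain ⟨t2, ht2, hmem2⟩ := hExec2.exists_isTrace_mem
  exact (hllni o s1 s2 t1 t2 hStart1 hStart2 hI ht1 ht2).rel_of_mem_of_terminal
    (hsymm o) (hEndLow o) (fun s hs => (hEndStuck s hs).not_stepRel)
    (hEndIndist o) ht1.isChain ht2.isChain hmem1 hmem2 hEnd1 hEnd2
end

section
/- For a deterministic abstract machine, single-step noninterference (SSNI) implies low-lockstep noninterference (LLNI), provided that the indistinguishability relation is a partial equivalence relation (symmetric and transitive) and that indistinguishable states agree on whether they are low. -/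
namespace Machine

variable {S O : Type} (M : Machine S O)

/-- Single-step noninterference: the three unwinding conditions. -/
def SSNI (Low : O → S → Prop) : Prop :=
  ∀ o,
    (∀ s1 s2 s1' s2', Low o s1 → Low o s2 → M.indist o s1 s2 →
        M.StepRel s1 s1' → M.StepRel s2 s2' → M.indist o s1' s2') ∧
    (∀ s s', ¬ Low o s → M.StepRel s s' → ¬ Low o s' → M.indist o s s') ∧
    (∀ s1 s2 s1' s2', ¬ Low o s1 → ¬ Low o s2 → M.indist o s1 s2 →
        M.StepRel s1 s1' → M.StepRel s2 s2' → Low o s1' → Low o s2' →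
        M.indist o s1' s2')

end Machine

theorem ssni_aux {S O : Type} (M : Machine S O) (Low : O → S → Prop) (o : O)
    (hsymm : ∀ s1 s2, M.indist o s1 s2 → M.indist o s2 s1)
    (htrans : ∀ s1 s2 s3, M.indist o s1 s2 → M.indist o s2 s3 → M.indist o s1 s3)
    (hLowAgree : ∀ s1 s2, M.indist o s1 s2 → (Low o s1 ↔ Low o s2))
    (h1 : ∀ s1 s2 s1' s2', Low o s1 → Low o s2 → M.indist o s1 s2 →
        M.StepRel s1 s1' → M.StepRel s2 s2' → M.indist o s1' s2')
    (h2 : ∀ s s', ¬ Low o s → M.StepRel s s' → ¬ Low o s' → M.indist o s s')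
    (h3 : ∀ s1 s2 s1' s2', ¬ Low o s1 → ¬ Low o s2 → M.indist o s1 s2 →
        M.StepRel s1 s1' → M.StepRel s2 s2' → Low o s1' → Low o s2' →
        M.indist o s1' s2') :
    ∀ n t1 t2 s1 s2, t1.length + t2.length ≤ n → M.indist o s1 s2 →
      M.IsTrace s1 t1 → M.IsTrace s2 t2 →
      Machine.TIndist (Low o) (M.indist o) t1 t2 := by
  intro n
  induction n with
  | zero => intro t1 t2 s1 s2 hn _ ht1 _; cases ht1 <;> simp at hn
  | succ n ih =>
    intro t1 t2 s1 s2 hn hind ht1 ht2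
    by_cases hL1 : Low o s1
    · have hL2 : Low o s2 := (hLowAgree _ _ hind).mp hL1
      cases ht1 with
      | single => cases ht2 with
        | single => exact .lockstep hL1 hL2 hind (.symm (.nilR _))
        | cons hstep2 ht2' => exact .lockstep hL1 hL2 hind (.symm (.nilR _))
      | cons hstep1 ht1' =>
        cases ht2 with
        | single => exact .lockstep hL1 hL2 hind (.nilR _)
        | cons hstep2 ht2' =>
          refine .lockstep hL1 hL2 hind
            (ih _ _ _ _ ?_ (h1 _ _ _ _ hL1 hL2 hind hstep1 hstep2) ht1' ht2')
          simp at hn ⊢; omega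
    · have hL2 : ¬ Low o s2 := fun h => hL1 ((hLowAgree _ _ hind).mpr h)
      cases ht1 with
      | single => exact .highFilter hL1 (.symm (.nilR _))
      | cons hstep1 ht1' =>
        rename_i s1' t1'
        cases ht2 with
        | single => exact .symm (.highFilter hL2 (.symm (.nilR _)))
        | cons hstep2 ht2' =>
          rename_i s2' t2'
          by_cases hL1' : Low o s1'
          · by_cases hL2' : Low o s2'
            · have hind' := h3 _ _ _ _ hL1 hL2 hind hstep1 hstep2 hL1' hL2'
              refine .highFilter hL1
                (.symm (.highFilter hL2 (.symm (ih _ _ _ _ ?_ hind' ht1' ht2'))))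
              simp at hn ⊢; omega
            · have hind2 : M.indist o s2 s2' := h2 _ _ hL2 hstep2 hL2'
              have hx : M.indist o s1 s2' := htrans _ _ _ hind hind2
              refine .symm (.highFilter hL2
                (.symm (ih _ _ _ _ ?_ hx (.cons hstep1 ht1') ht2')))
              simp at hn ⊢; omega
          · have hind1 : M.indist o s1 s1' := h2 _ _ hL1 hstep1 hL1'
            have hx : M.indist o s1' s2 := htrans _ _ _ (hsymm _ _ hind1) hind
            refine .highFilter hL1 (ih _ _ _ _ ?_ hx ht1' (.cons hstep2 ht2'))
            simp at hn ⊢; omega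

/-- SSNI implies LLNI, provided indistinguishability is a partial equivalence
relation (symmetric and transitive) and indistinguishable states agree on
whether they are low. -/
theorem ssni_implies_llni {S O : Type} (M : Machine S O)
    (Start : S → Prop) (Low : O → S → Prop)
    (hsymm : ∀ o s1 s2, M.indist o s1 s2 → M.indist o s2 s1)
    (htrans : ∀ o s1 s2 s3, M.indist o s1 s2 → M.indist o s2 s3 → M.indist o s1 s3)
    (hLowAgree : ∀ o s1 s2, M.indist o s1 s2 → (Low o s1 ↔ Low o s2))
    (hssni : M.SSNI Low) :
    M.LLNI Start Low := by
  intro o s1 s2 t1 t2 _ _ hind ht1 ht2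
  obtain ⟨h1, h2, h3⟩ := hssni o
  exact ssni_aux M Low o (hsymm o) (htrans o) (hLowAgree o) h1 h2 h3
    (t1.length + t2.length) t1 t2 s1 s2 le_rfl hind ht1 ht2
end

section
/- For a deterministic abstract machine, multi-step noninterference (MSNI) implies single-step noninterference (SSNI), provided that the indistinguishability relation is reflexive and symmetric and that indistinguishable states agree on whether they are low. -/
namespace Machine

variable {S O : Type} (M : Machine S O)

/-- Trace indistinguishability `≈⋆` for MSNI. -/
inductive MTIndist (Low : S → Prop) (R : S → S → Prop) : List S → List S → Prop where
  | lowSteps {s1 s2 s1' s2' : S} {t1 t2 : List S} :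
      Low s1 → Low s2 → R s1' s2' →
      MTIndist Low R (s1' :: t1) (s2' :: t2) →
      MTIndist Low R (s1 :: s1' :: t1) (s2 :: s2' :: t2)
  | highToLowSteps {s1 s2 s1' s2' : S} {t1 t2 : List S} :
      ¬ Low s1 → ¬ Low s2 → Low s1' → Low s2' → R s1' s2' →
      MTIndist Low R (s1' :: t1) (s2' :: t2) →
      MTIndist Low R (s1 :: s1' :: t1) (s2 :: s2' :: t2)
  | highToHighStep {s1 s1' s2 : S} {t1 t2 : List S} :
      ¬ Low s1 → ¬ Low s1' → R s1 s1' →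
      MTIndist Low R (s1' :: t1) (s2 :: t2) →
      MTIndist Low R (s1 :: s1' :: t1) (s2 :: t2)
  | lowStepEnd {s1 s1' s2 : S} {t1 : List S} :
      (Low s1 ∨ Low s1') →
      MTIndist Low R (s1' :: t1) [s2] →
      MTIndist Low R (s1 :: s1' :: t1) [s2]
  | bothEnd (s1 s2 : S) : MTIndist Low R [s1] [s2]
  | symm {t1 t2 : List S} : MTIndist Low R t1 t2 → MTIndist Low R t2 t1

/-- Multi-step noninterference. -/
def MSNI (Low : O → S → Prop) : Prop :=
  ∀ o s1 s2 t1 t2, M.indist o s1 s2 →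
    M.IsTrace s1 t1 → M.IsTrace s2 t2 →
    MTIndist (Low o) (M.indist o) t1 t2

end Machine

/-- MSNI implies SSNI, provided indistinguishability is reflexive and
symmetric and indistinguishable states agree on whether they are low. -/
theorem msni_implies_ssni {S O : Type} (M : Machine S O)
    (Low : O → S → Prop)
    (hrefl : ∀ o s, M.indist o s s)
    (hsymm : ∀ o s1 s2, M.indist o s1 s2 → M.indist o s2 s1)
    (hLowAgree : ∀ o s1 s2, M.indist o s1 s2 → (Low o s1 ↔ Low o s2))
    (hmsni : M.MSNI Low) :
    M.SSNI Low := by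
  have inv1 : ∀ {t1 t2 : List S}, ∀ o, Machine.MTIndist (Low o) (M.indist o) t1 t2 →
      ∀ a b c d, t1 = [a, b] → t2 = [c, d] → Low o a → Low o c → M.indist o b d := by
    intro t1 t2 o h
    induction h with
    | lowSteps h1 h2 hR hrest ih =>
      intro a b c d e1 e2 la lc
      injection e1 with e1 e1'; injection e1' with e1' e1''
      injection e2 with e2 e2'; injection e2' with e2' e2''
      subst e1; subst e1'; subst e2; subst e2'; exact hR
    | highToLowSteps h1 h2 h3 h4 hR hrest ih =>
      intro a b c d e1 e2 la lc
      injection e1 with e1 e1'; subst e1; exact absurd la h1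
    | highToHighStep h1 h2 hR hrest ih =>
      intro a b c d e1 e2 la lc
      injection e1 with e1 e1'; subst e1; exact absurd la h1
    | lowStepEnd h1 hrest ih =>
      intro a b c d e1 e2 la lc; simp at e2
    | bothEnd s1 s2 =>
      intro a b c d e1 e2 la lc; simp at e1
    | symm h ih =>
      intro a b c d e1 e2 la lc
      exact hsymm o _ _ (ih c d a b e2 e1 lc la)
  have inv3 : ∀ {t1 t2 : List S}, ∀ o, Machine.MTIndist (Low o) (M.indist o) t1 t2 →
      ∀ a b c d, t1 = [a, b] → t2 = [c, d] → ¬ Low o a → ¬ Low o c →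
        Low o b → Low o d → M.indist o b d := by
    intro t1 t2 o h
    induction h with
    | lowSteps h1 h2 hR hrest ih =>
      intro a b c d e1 e2 la lc lb ld
      injection e1 with e1 e1'; subst e1; exact absurd h1 la
    | highToLowSteps h1 h2 h3 h4 hR hrest ih =>
      intro a b c d e1 e2 la lc lb ld
      injection e1 with e1 e1'; injection e1' with e1' e1''
      injection e2 with e2 e2'; injection e2' with e2' e2''
      subst e1; subst e1'; subst e2; subst e2'; exact hR
    | highToHighStep h1 h2 hR hrest ih =>
      intro a b c d e1 e2 la lc lb ld
      injection e1 with e1 e1'; injection e1' with e1' e1''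
      subst e1'; exact absurd lb h2
    | lowStepEnd h1 hrest ih =>
      intro a b c d e1 e2 la lc lb ld; simp at e2
    | bothEnd s1 s2 =>
      intro a b c d e1 e2 la lc lb ld; simp at e1
    | symm h ih =>
      intro a b c d e1 e2 la lc lb ld
      exact hsymm o _ _ (ih c d a b e2 e1 lc la ld lb)
  have inv2 : ∀ {t1 t2 : List S}, ∀ o, Machine.MTIndist (Low o) (M.indist o) t1 t2 →
      ∀ a b c, (t1 = [a, b] ∧ t2 = [c]) ∨ (t1 = [c] ∧ t2 = [a, b]) →
        ¬ Low o a → ¬ Low o b → M.indist o a b := by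
    intro t1 t2 o h
    induction h with
    | lowSteps h1 h2 hR hrest ih =>
      intro a b c e la lb
      rcases e with ⟨e1, e2⟩ | ⟨e1, e2⟩
      · simp at e2
      · simp at e1
    | highToLowSteps h1 h2 h3 h4 hR hrest ih =>
      intro a b c e la lb
      rcases e with ⟨e1, e2⟩ | ⟨e1, e2⟩
      · simp at e2
      · simp at e1
    | highToHighStep h1 h2 hR hrest ih =>
      intro a b c e la lb
      rcases e with ⟨e1, e2⟩ | ⟨e1, e2⟩
      · injection e1 with e1 e1'; injection e1' with e1' e1''
        subst e1; subst e1'; exact hR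
      · simp at e1
    | lowStepEnd h1 hrest ih =>
      intro a b c e la lb
      rcases e with ⟨e1, e2⟩ | ⟨e1, e2⟩
      · injection e1 with e1 e1'; injection e1' with e1' e1''
        subst e1; subst e1'
        rcases h1 with h | h
        · exact absurd h la
        · exact absurd h lb
      · simp at e1
    | bothEnd s1 s2 =>
      intro a b c e la lb
      rcases e with ⟨e1, e2⟩ | ⟨e1, e2⟩
      · simp at e1
      · simp at e2
    | symm h ih =>
      intro a b c e la lb
      rcases e with ⟨e1, e2⟩ | ⟨e1, e2⟩
      · exact ih a b c (Or.inr ⟨e2, e1⟩) la lb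
      · exact ih a b c (Or.inl ⟨e2, e1⟩) la lb
  intro o
  refine ⟨?_, ?_, ?_⟩
  · intro s1 s2 s1' s2' l1 l2 hind hs1 hs2
    have h := hmsni o s1 s2 [s1, s1'] [s2, s2'] hind
      (Machine.IsTrace.cons hs1 (Machine.IsTrace.single s1'))
      (Machine.IsTrace.cons hs2 (Machine.IsTrace.single s2'))
    exact inv1 o h s1 s1' s2 s2' rfl rfl l1 l2
  · intro s s' hns hst hns'
    have h := hmsni o s s [s, s'] [s] (hrefl o s)
      (Machine.IsTrace.cons hst (Machine.IsTrace.single s'))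
      (Machine.IsTrace.single s)
    exact inv2 o h s s' s (Or.inl ⟨rfl, rfl⟩) hns hns'
  · intro s1 s2 s1' s2' hn1 hn2 hind hs1 hs2 l1' l2'
    have h := hmsni o s1 s2 [s1, s1'] [s2, s2'] hind
      (Machine.IsTrace.cons hs1 (Machine.IsTrace.single s1'))
      (Machine.IsTrace.cons hs2 (Machine.IsTrace.single s2'))
    exact inv3 o h s1 s1' s2 s2' rfl rfl hn1 hn2 l1' l2'
end
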